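/- If span(φ₁,…,φ_n) is invariant under the linear operators L_{g_i} for i = 1,…,m and each φ_j is an eigenfunction of L_f, then for every polynomial control input u(t) and trajectory x(t), the function t ↦ (φ₁(x(t)),…,φ_n(x(t))) is continuously differentiable and its derivative at each time lies in the span of {F z(t), G₁ z(t),…,G_m z(t)} with coefficients (1, u₁(t),…,u_m(t)). -/

import Mathlib

/-!
Along a trajectory of `ẋ = f x + Σᵢ uᵢ gᵢ x`, the chain rule gives
`d/dt φⱼ(x t) = L_f φⱼ (x t) + Σᵢ uᵢ t · L_{gᵢ} φⱼ (x t)`, and the eigenfunction and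
span-invariance relations rewrite the right-hand side as the `j`-th entry of
`F z t + Σᵢ uᵢ t • Gᵢ z t`. This derivative is continuous in `t` because `z` is
differentiable and polynomial inputs are continuous, so `z` is `C¹`.
-/

open Matrix

theorem contDiff_one_of_hasDerivAt {𝕜 F : Type*} [NontriviallyNormedField 𝕜]
    [NormedAddCommGroup F] [NormedSpace 𝕜 F] {z z' : 𝕜 → F}
    (hz : ∀ t, HasDerivAt z (z' t) t) (hz' : Continuous z') : ContDiff 𝕜 1 z := by
  have hderiv : deriv z = z' := funext fun t => (hz t).deriv
  exact contDiff_one_iff_deriv.2 ⟨fun t => (hz t).differentiableAt, hderiv ▸ hz'⟩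

section ControlAffine

variable {E : Type*} [NormedAddCommGroup E] [NormedSpace ℝ E] {n m : ℕ}
  {f : E → E} {g : Fin m → E → E} {φ : Fin n → E → ℝ}
  {lam : Fin n → ℝ} {G : Fin m → Matrix (Fin n) (Fin n) ℝ}

theorem fderiv_apply_controlAffine
    (hLf : ∀ j y, fderiv ℝ (φ j) y (f y) = lam j * φ j y)
    (hLg : ∀ i j y, fderiv ℝ (φ j) y (g i y) = ∑ k, G i j k * φ k y)
    (c : Fin m → ℝ) (y : E) (j : Fin n) :
    fderiv ℝ (φ j) y (f y + ∑ i, c i • g i y) =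
      (diagonal lam *ᵥ (fun k => φ k y) + ∑ i, c i • G i *ᵥ (fun k => φ k y)) j := by
  simp only [map_add, map_sum, map_smul, hLf, hLg, Pi.add_apply, mulVec_diagonal,
    Finset.sum_apply, Pi.smul_apply, smul_eq_mul]
  rfl

theorem hasDerivAt_lift_controlAffine
    (hφ : ∀ j, Differentiable ℝ (φ j))
    (hLf : ∀ j y, fderiv ℝ (φ j) y (f y) = lam j * φ j y)
    (hLg : ∀ i j y, fderiv ℝ (φ j) y (g i y) = ∑ k, G i j k * φ k y)
    {x : ℝ → E} {c : Fin m → ℝ} {t : ℝ}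
    (hx : HasDerivAt x (f (x t) + ∑ i, c i • g i (x t)) t) :
    HasDerivAt (fun s j => φ j (x s))
      (diagonal lam *ᵥ (fun j => φ j (x t)) + ∑ i, c i • G i *ᵥ (fun j => φ j (x t))) t :=
  hasDerivAt_pi.2 fun j => by
    rw [← fderiv_apply_controlAffine hLf hLg]
    exact ((hφ j) (x t)).hasFDerivAt.comp_hasDerivAt t hx

end ControlAffine

theorem koopman_bilinear_polynomial_input_general {d n m : ℕ}
    (f : (Fin d → ℝ) → (Fin d → ℝ)) (g : Fin m → (Fin d → ℝ) → (Fin d → ℝ))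
    (p : Fin m → Polynomial ℝ) (u : ℝ → Fin m → ℝ)
    (hu : ∀ i t, u t i = (p i).eval t)
    (x : ℝ → Fin d → ℝ)
    (hx : ∀ t : ℝ, HasDerivAt x (f (x t) + ∑ i, u t i • g i (x t)) t)
    (φ : Fin n → (Fin d → ℝ) → ℝ) (hφ : ∀ j, ContDiff ℝ 1 (φ j))
    (lam : Fin n → ℝ) (G : Fin m → Matrix (Fin n) (Fin n) ℝ)
    (hLf : ∀ j y, fderiv ℝ (φ j) y (f y) = lam j * φ j y)
    (hLg : ∀ i j y, fderiv ℝ (φ j) y (g i y) = ∑ k, G i j k * φ k y) :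
    ContDiff ℝ 1 (fun t : ℝ => (fun j => φ j (x t))) ∧
    ∀ t : ℝ,
      HasDerivAt (fun s : ℝ => (fun j => φ j (x s)))
        ((1 : ℝ) • (Matrix.diagonal lam).mulVec (fun j => φ j (x t)) +
          ∑ i, u t i • (G i).mulVec (fun j => φ j (x t))) t := by
  have hderiv (t : ℝ) := hasDerivAt_lift_controlAffine
    (fun j => (hφ j).differentiable one_ne_zero) hLf hLg (hx t)
  have hz : Continuous fun t j => φ j (x t) :=
    continuous_pi fun j => (hφ j).continuous.comp
      (continuous_iff_continuousAt.2 fun t => (hx t).continuousAt)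
  have hu_cont (i : Fin m) : Continuous fun t => u t i := by
    simpa only [hu] using (p i).continuous
  refine ⟨contDiff_one_of_hasDerivAt hderiv ?_, fun t => by simpa only [one_smul] using hderiv t⟩
  exact (continuous_const.matrix_mulVec hz).add
    (continuous_finsetSum _ fun i _ => (hu_cont i).smul (continuous_const.matrix_mulVec hz))

/-- In the setting of the Koopman bilinear form theorem, for every polynomial
control input `u` and trajectory `x`, the lifted curve
`z t = (φ₁ (x t),…,φₙ (x t))` is continuously differentiable and its
derivative at each time is `1 • F z t + Σᵢ uᵢ t • Gᵢ z t`, i.e. it lies in the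
span of `{F z t, G₁ z t,…,Gₘ z t}` with coefficients `(1, u₁ t,…,uₘ t)`. -/
theorem koopman_bilinear_polynomial_input {d n m : ℕ}
    (f : (Fin d → ℝ) → (Fin d → ℝ)) (g : Fin m → (Fin d → ℝ) → (Fin d → ℝ))
    (hf : LipschitzWith 1 f) (hg : ∀ i, LipschitzWith 1 (g i))
    (p : Fin m → Polynomial ℝ) (u : ℝ → Fin m → ℝ)
    (hu : ∀ i t, u t i = (p i).eval t)
    (x : ℝ → Fin d → ℝ)
    (hx : ∀ t : ℝ, HasDerivAt x (f (x t) + ∑ i, u t i • g i (x t)) t)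
    (φ : Fin n → (Fin d → ℝ) → ℝ) (hφ : ∀ j, ContDiff ℝ 1 (φ j))
    (lam : Fin n → ℝ) (G : Fin m → Matrix (Fin n) (Fin n) ℝ)
    (hLf : ∀ j y, fderiv ℝ (φ j) y (f y) = lam j * φ j y)
    (hLg : ∀ i j y, fderiv ℝ (φ j) y (g i y) = ∑ k, G i j k * φ k y) :
    ContDiff ℝ 1 (fun t : ℝ => (fun j => φ j (x t))) ∧
    ∀ t : ℝ,
      HasDerivAt (fun s : ℝ => (fun j => φ j (x s)))
        ((1 : ℝ) • (Matrix.diagonal lam).mulVec (fun j => φ j (x t)) +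
          ∑ i, u t i • (G i).mulVec (fun j => φ j (x t))) t :=
  koopman_bilinear_polynomial_input_general f g p u hu x hx φ hφ lam G hLf hLg
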